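/- arXiv:1511.00146 — 2 statements merged into one kernel-verified Lean document; each statement's English description precedes it below -/
import Mathlib

section
/- (Proposition 2: deterministic proximal-gradient variational inference with varying step sizes.) Let f : E → ℝ be differentiable with L-Lipschitz gradient (L > 0), let h : E → ℝ be convex on S, let α > 0, let t ≥ 1, and let λ : ℕ → E and β : ℕ → ℝ satisfy: λ₀ ∈ S; for every k < t, 0 < β_k ≤ 2α/L, λ_{k+1} ∈ S minimizes λ ↦ ⟨λ, ∇f(λ_k)⟩ + h(λ) + (1/β_k)·D(λ, λ_k) over S, h is differentiable at λ_{k+1}, the map λ ↦ D(λ, λ_k) is differentiable at λ_{k+1}, and ⟨λ_{k+1} − λ_k, ∇₁D(λ_{k+1}, λ_k)⟩ ≥ α·‖λ_{k+1} − λ_k‖²; moreover β_k < 2α/L for at least one k < t. Suppose 𝓛* ∈ ℝ satisfies −(f(λ) + h(λ)) ≤ 𝓛* for all λ ∈ S, and set C₀ := 𝓛* + f(λ₀) + h(λ₀) and G_k := (λ_k − λ_{k+1})/β_k. Then min over k ∈ {0, 1, …, t−1} of ‖G_k‖² is at most C₀ / ( Σ_{k=0}^{t−1} (α·β_k − (L/2)·β_k²)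 ). -/
/-!
Each proximal step decreases `f + h` by at least `(α / β_k - L / 2) ‖λ_{k+1} - λ_k‖²`, which is
`(α β_k - (L / 2) β_k²) ‖G_k‖²`: the descent lemma for the `L`-smooth `f` bounds `f(λ_{k+1})`, and
the first-order optimality condition of the step, combined with the gradient inequality for the
convex `h` and the coercivity `⟨λ_{k+1} - λ_k, ∇₁D⟩ ≥ α ‖λ_{k+1} - λ_k‖²`, controls the linear term.
Summing telescopes to at most `f(λ₀) + h(λ₀) - (f(λ_t) + h(λ_t)) ≤ C₀`, and the minimum of the
`‖G_k‖²` is at most their weighted average; the weights are nonnegative since `β_k ≤ 2α/L`, with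
positive sum since one inequality is strict.
-/

open scoped RealInnerProductSpace

section

open InnerProductSpace AffineMap
open scoped Gradient

variable {E : Type*} [NormedAddCommGroup E] [InnerProductSpace ℝ E]

theorem IsMinOn.hasFDerivAt_apply_sub_nonneg {S : Set E} (hS : Convex ℝ S) {φ : E → ℝ}
    {φ' : StrongDual ℝ E} {x y : E} (hmin : IsMinOn φ S x) (hx : x ∈ S) (hy : y ∈ S)
    (hφ : HasFDerivAt φ φ' x) : 0 ≤ φ' (y - x) :=
  hmin.localize.hasFDerivWithinAt_nonneg hφ.hasFDerivWithinAt
    (sub_mem_posTangentConeAt_of_segment_subset (hS.segment_subset hx hy))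

theorem mul_norm_smul_sub_sq {β : ℝ} (hβ : β ≠ 0) (α L : ℝ) (x x' : E) :
    (α * β - L / 2 * β ^ 2) * ‖(1 / β) • (x - x')‖ ^ 2 = (α / β - L / 2) * ‖x' - x‖ ^ 2 := by
  rw [norm_smul, norm_sub_rev, mul_pow, Real.norm_eq_abs, sq_abs]
  field_simp

variable [CompleteSpace E]

theorem HasGradientAt.hasDerivAt_comp_lineMap {f : E → ℝ} {g x y : E} {s : ℝ}
    (hf : HasGradientAt f g (lineMap x y s)) :
    HasDerivAt (f ∘ lineMap x y) ⟪g, y - x⟫ s := by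
  simpa [toDual_apply_apply] using hf.hasFDerivAt.comp_hasDerivAt s hasDerivAt_lineMap

theorem ConvexOn.inner_gradient_sub_le {S : Set E} {h : E → ℝ} (hh : ConvexOn ℝ S h) {x y g : E}
    (hx : x ∈ S) (hy : y ∈ S) (hg : HasGradientAt h g x) : ⟪g, y - x⟫ ≤ h y - h x := by
  have hd : HasDerivAt (h ∘ lineMap x y) ⟪g, y - x⟫ (0 : ℝ) :=
    HasGradientAt.hasDerivAt_comp_lineMap (by simpa using hg)
  simpa [slope_def_field] using (hh.comp_affineMap (lineMap x y)).le_slope_of_hasDerivAt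
    (x := 0) (y := 1) (by simpa) (by simpa) zero_lt_one hd

theorem le_add_inner_gradient_add_of_lipschitz_gradient {f : E → ℝ} {L : ℝ}
    (hf : Differentiable ℝ f) (hlip : ∀ x y, ‖∇ f x - ∇ f y‖ ≤ L * ‖x - y‖) (x y : E) :
    f y ≤ f x + ⟪∇ f x, y - x⟫ + L / 2 * ‖y - x‖ ^ 2 := by
  set v := y - x
  set K := L / 2 * ‖v‖ ^ 2
  set φ : ℝ → ℝ := fun s => (f ∘ lineMap x y) s - s * ⟪∇ f x, v⟫ - K * s ^ 2
  have hφ : ∀ s, HasDerivAt φ (⟪∇ f (lineMap x y s), v⟫ - ⟪∇ f x, v⟫ - K * (2 * s)) s := by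
    intro s
    have h1 := (hf (lineMap x y s)).hasGradientAt.hasDerivAt_comp_lineMap
    have h2 := (hasDerivAt_id s).mul_const ⟪∇ f x, v⟫
    have h3 := (hasDerivAt_pow 2 s).const_mul K
    refine ((h1.sub h2).sub h3).congr_deriv ?_
    norm_num [v]
  -- `s ↦ f (x + s v)` has `L ‖v‖²`-Lipschitz derivative, so `φ` is antitone on `[0, 1]`.
  have hanti : AntitoneOn φ (Set.Icc 0 1) := by
    refine antitoneOn_of_hasDerivWithinAt_nonpos (convex_Icc 0 1)
      (fun s _ => (hφ s).continuousAt.continuousWithinAt) (fun s _ => (hφ s).hasDerivWithinAt) ?_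
    intro s hs
    rw [interior_Icc] at hs
    have hdist : ‖lineMap x y s - x‖ = s * ‖v‖ := by
      rw [← vsub_eq_sub, lineMap_vsub_left, norm_smul, Real.norm_of_nonneg hs.1.le, vsub_eq_sub]
    have hinner : ⟪∇ f (lineMap x y s) - ∇ f x, v⟫ ≤ L * s * ‖v‖ ^ 2 := calc
      _ ≤ ‖∇ f (lineMap x y s) - ∇ f x‖ * ‖v‖ := real_inner_le_norm _ _
      _ ≤ L * ‖lineMap x y s - x‖ * ‖v‖ := by gcongr; exact hlip _ _
      _ = L * s * ‖v‖ ^ 2 := by rw [hdist]; ring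
    have hK : K * (2 * s) = L * s * ‖v‖ ^ 2 := by ring
    rw [inner_sub_left] at hinner
    linarith
  have hφ01 := hanti (by simp) (by simp) zero_le_one
  simp only [φ, Function.comp_apply, lineMap_apply_zero, lineMap_apply_one] at hφ01
  linarith

theorem proximal_gradient_step_decrease {S : Set E} (hS : Convex ℝ S) {f h d : E → ℝ} {L α β : ℝ}
    (hf : Differentiable ℝ f) (hlip : ∀ x y, ‖∇ f x - ∇ f y‖ ≤ L * ‖x - y‖)
    (hh : ConvexOn ℝ S h) (hβ : 0 < β) {x x' : E} (hx : x ∈ S) (hx' : x' ∈ S)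
    (hmin : IsMinOn (fun y => ⟪y, ∇ f x⟫ + h y + (1 / β) * d y) S x')
    (hhx' : DifferentiableAt ℝ h x') (hdx' : DifferentiableAt ℝ d x')
    (hd : α * ‖x' - x‖ ^ 2 ≤ ⟪x' - x, ∇ d x'⟫) :
    f x' + h x' ≤ f x + h x - (α / β - L / 2) * ‖x' - x‖ ^ 2 := by
  have hobj : HasFDerivAt (fun y => ⟪y, ∇ f x⟫ + h y + (1 / β) * d y)
      (innerSL ℝ (∇ f x) + toDual ℝ E (∇ h x') + (1 / β) • toDual ℝ E (∇ d x')) x' := by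
    refine ((innerSL ℝ (∇ f x)).hasFDerivAt.congr_of_eventuallyEq ?_).add
      hhx'.hasGradientAt.hasFDerivAt |>.add (hdx'.hasGradientAt.hasFDerivAt.const_mul _)
    exact .of_forall fun y => real_inner_comm _ _
  have hopt := hmin.hasFDerivAt_apply_sub_nonneg hS hx' hx hobj
  simp only [_root_.add_apply, _root_.smul_apply, innerSL_apply_apply,
    toDual_apply_apply, smul_eq_mul] at hopt
  have hconv := hh.inner_gradient_sub_le hx' hx hhx'.hasGradientAt
  have hdesc := le_add_inner_gradient_add_of_lipschitz_gradient hf hlip x x'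
  have hdβ := mul_le_mul_of_nonneg_left hd (one_div_nonneg.2 hβ.le)
  have hflip : ∀ u : E, ⟪u, x' - x⟫ = -⟪u, x - x'⟫ := fun u => by
    rw [← inner_neg_right, neg_sub]
  rw [real_inner_comm, hflip] at hdβ
  rw [hflip] at hdesc
  have hdiv : α / β * ‖x' - x‖ ^ 2 = 1 / β * (α * ‖x' - x‖ ^ 2) := by ring
  linarith

theorem step_weight_nonneg {α L β : ℝ} (hL : 0 < L) (hβ : 0 ≤ β) (hβle : β ≤ 2 * α / L) :
    0 ≤ α * β - L / 2 * β ^ 2 := by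
  rw [le_div_iff₀ hL] at hβle
  nlinarith

theorem step_weight_pos {α L β : ℝ} (hL : 0 < L) (hβ : 0 < β) (hβlt : β < 2 * α / L) :
    0 < α * β - L / 2 * β ^ 2 := by
  rw [lt_div_iff₀ hL] at hβlt
  nlinarith

theorem Finset.inf'_le_div_of_sum_mul_le {ι : Type*} {s : Finset ι} (hs : s.Nonempty)
    {a w : ι → ℝ} {C : ℝ} (hw : ∀ i ∈ s, 0 ≤ w i) (hW : 0 < ∑ i ∈ s, w i)
    (hC : ∑ i ∈ s, w i * a i ≤ C) : s.inf' hs a ≤ C / ∑ i ∈ s, w i := by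
  rw [le_div_iff₀ hW, Finset.mul_sum]
  refine le_trans (Finset.sum_le_sum fun i hi => ?_) hC
  rw [mul_comm]
  exact mul_le_mul_of_nonneg_left (Finset.inf'_le _ hi) (hw i hi)

end

/-- Proposition 2: deterministic proximal-gradient variational inference with
varying step sizes `0 < β_k ≤ 2α/L` (strict for at least one `k`):
`min_{k < t} ‖G_k‖² ≤ C₀ / Σ_{k<t} (αβ_k − (L/2)β_k²)`, where
`G_k := (λ_k − λ_{k+1})/β_k` and `C₀ := 𝓛* + f(λ₀) + h(λ₀)`. -/
theorem stmt_2 {E : Type*} [NormedAddCommGroup E] [InnerProductSpace ℝ E] [CompleteSpace E]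
    (S : Set E) (hS : Convex ℝ S)
    (h : E → ℝ) (D : E → E → ℝ)
    (f : E → ℝ) (L : ℝ) (hL : 0 < L)
    (hf : Differentiable ℝ f)
    (hlip : ∀ x y : E, ‖gradient f x - gradient f y‖ ≤ L * ‖x - y‖)
    (hconv : ConvexOn ℝ S h)
    (α : ℝ) (t : ℕ) (ht : 1 ≤ t)
    (lam : ℕ → E) (β : ℕ → ℝ)
    (hlam0 : lam 0 ∈ S)
    (hβpos : ∀ k < t, 0 < β k)
    (hβle : ∀ k < t, β k ≤ 2 * α / L)
    (hstrict : ∃ k < t, β k < 2 * α / L)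
    (hmem : ∀ k < t, lam (k + 1) ∈ S)
    (hmin : ∀ k < t, ∀ y ∈ S,
      ⟪lam (k + 1), gradient f (lam k)⟫ + h (lam (k + 1)) +
          (1 / β k) * D (lam (k + 1)) (lam k) ≤
        ⟪y, gradient f (lam k)⟫ + h y + (1 / β k) * D y (lam k))
    (hdiff : ∀ k < t, DifferentiableAt ℝ h (lam (k + 1)))
    (hDdiff : ∀ k < t, DifferentiableAt ℝ (fun x => D x (lam k)) (lam (k + 1)))
    (hA6 : ∀ k < t,
      ⟪lam (k + 1) - lam k, gradient (fun x => D x (lam k)) (lam (k + 1))⟫ ≥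
        α * ‖lam (k + 1) - lam k‖ ^ 2)
    (Lstar : ℝ) (hLstar : ∀ x ∈ S, -(f x + h x) ≤ Lstar) :
    (Finset.range t).inf' (Finset.nonempty_range_iff.mpr (by omega))
        (fun k => ‖(1 / β k) • (lam k - lam (k + 1))‖ ^ 2) ≤
      (Lstar + f (lam 0) + h (lam 0)) /
        (∑ k ∈ Finset.range t, (α * β k - (L / 2) * (β k) ^ 2)) := by
  have hlamS : ∀ k ≤ t, lam k ∈ S := fun
    | 0, _ => hlam0
    | k + 1, hk => hmem k hk
  have hdecrease : ∀ k ∈ Finset.range t, (α * β k - L / 2 * β k ^ 2) *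
      ‖(1 / β k) • (lam k - lam (k + 1))‖ ^ 2 ≤
        f (lam k) + h (lam k) - (f (lam (k + 1)) + h (lam (k + 1))) := fun k hk => by
    rw [Finset.mem_range] at hk
    rw [mul_norm_smul_sub_sq (hβpos k hk).ne']
    linarith [proximal_gradient_step_decrease hS hf hlip hconv (hβpos k hk) (hlamS k hk.le)
      (hmem k hk) (d := fun y => D y (lam k)) (hmin k hk) (hdiff k hk) (hDdiff k hk) (hA6 k hk)]
  have hweight : ∀ k ∈ Finset.range t, 0 ≤ α * β k - L / 2 * β k ^ 2 := fun k hk =>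
    step_weight_nonneg hL (hβpos k (Finset.mem_range.1 hk)).le (hβle k (Finset.mem_range.1 hk))
  obtain ⟨k₀, hk₀, hβk₀⟩ := hstrict
  have hweight_pos := step_weight_pos hL (hβpos k₀ hk₀) hβk₀
  refine Finset.inf'_le_div_of_sum_mul_le _ hweight
    (Finset.sum_pos' hweight ⟨k₀, Finset.mem_range.2 hk₀, hweight_pos⟩) ?_
  calc _ ≤ ∑ k ∈ Finset.range t, (f (lam k) + h (lam k) - (f (lam (k + 1)) + h (lam (k + 1)))) :=
        Finset.sum_le_sum hdecrease
    _ = f (lam 0) + h (lam 0) - (f (lam t) + h (lam t)) :=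
        Finset.sum_range_sub' (fun k => f (lam k) + h (lam k)) t
    _ ≤ Lstar + f (lam 0) + h (lam 0) := by linarith [hLstar _ (hlamS t le_rfl)]
end

section
/- (One-step inequality for a stochastic gradient.) Let f : E → ℝ be differentiable with L-Lipschitz gradient (L > 0). Let λ_k ∈ S, g ∈ E, β > 0, c > 0, and let λ₊ ∈ S minimize λ ↦ ⟨λ, g⟩ + h(λ) + (1/β)·D(λ, λ_k) over S. Assume h is convex on S and differentiable at λ₊, the map λ ↦ D(λ, λ_k) is differentiable at λ₊, and α > 0 satisfies ⟨λ₊ − λ_k, ∇₁D(λ₊, λ_k)⟩ ≥ α·‖λ₊ − λ_k‖². Then, with G := (λ_k − λ₊)/β and δ := g − ∇f(λ_k), one has f(λ₊) + h(λ₊) ≤ f(λ_k) + h(λ_k) − ((α − 1/(2c))·β − (L/2)·β²)·‖G‖² + (c·β/2)·‖δ‖². -/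
/-!
By the first-order optimality condition of the proximal step, the convexity of `h` and the
strong-monotonicity assumption on `∇₁D`, the step satisfies the sufficient-decrease estimate
`h(λ₊) + ⟪g, λ₊ - λ_k⟫ + (α/β)‖λ₊ - λ_k‖² ≤ h(λ_k)`. The descent lemma for the `L`-smooth `f`
bounds `f(λ₊)` by `f(λ_k) + ⟪∇f(λ_k), λ₊ - λ_k⟫ + (L/2)‖λ₊ - λ_k‖²`. Adding the two leaves the
error term `⟪-δ, λ₊ - λ_k⟫`, which Young's inequality with weight `cβ` splits into
`(cβ/2)‖δ‖² + ‖λ₊ - λ_k‖²/(2cβ)`; finally `‖λ₊ - λ_k‖ = β‖G‖`.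
-/

open scoped RealInnerProductSpace

open Set

theorem ConvexOn.apply_sub_le_sub_of_hasFDerivAt {E : Type*} [NormedAddCommGroup E]
    [NormedSpace ℝ E] {s : Set E} {f : E → ℝ} {f' : E →L[ℝ] ℝ} {x y : E}
    (hf : ConvexOn ℝ s f) (hx : x ∈ s) (hy : y ∈ s) (hf' : HasFDerivAt f f' x) :
    f' (y - x) ≤ f y - f x := by
  let ℓ : ℝ →ᵃ[ℝ] E := AffineMap.lineMap x y
  have hℓ : HasDerivAt (f ∘ ℓ) (f' (y - x)) 0 := by
    have hf'' : HasFDerivAt f f' (ℓ 0) := by simpa [ℓ] using hf'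
    exact hf''.comp_hasDerivAt (0 : ℝ) AffineMap.hasDerivAt_lineMap
  have h0 : (0 : ℝ) ∈ ℓ ⁻¹' s := by simpa [ℓ] using hx
  have h1 : (1 : ℝ) ∈ ℓ ⁻¹' s := by simpa [ℓ] using hy
  simpa [ℓ, slope_def_field] using (hf.comp_affineMap ℓ).le_slope_of_hasDerivAt h0 h1 one_pos hℓ

section InnerProduct

variable {E : Type*} [NormedAddCommGroup E] [InnerProductSpace ℝ E]

theorem real_inner_le_mul_norm_sq_add_inv_mul_norm_sq (x y : E) {t : ℝ} (ht : 0 < t) :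
    ⟪x, y⟫ ≤ t / 2 * ‖x‖ ^ 2 + 1 / (2 * t) * ‖y‖ ^ 2 := by
  have hcs := real_inner_le_norm x y
  have hsq : 0 ≤ (t * ‖x‖ - ‖y‖) ^ 2 / (2 * t) := by positivity
  have hgap : t / 2 * ‖x‖ ^ 2 + 1 / (2 * t) * ‖y‖ ^ 2 - ‖x‖ * ‖y‖
      = (t * ‖x‖ - ‖y‖) ^ 2 / (2 * t) := by
    field_simp; ring
  linarith

variable [CompleteSpace E]

theorem apply_le_add_inner_gradient_add_sq_of_lipschitz {f : E → ℝ} {L : ℝ}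
    (hf : Differentiable ℝ f) (hlip : ∀ x y : E, ‖gradient f x - gradient f y‖ ≤ L * ‖x - y‖)
    (x y : E) : f y ≤ f x + ⟪gradient f x, y - x⟫ + L / 2 * ‖y - x‖ ^ 2 := by
  set u := y - x
  let φ : ℝ → ℝ := fun t => f (x + t • u) - t * ⟪gradient f x, u⟫
  have hφ : ∀ t, HasDerivAt φ ⟪gradient f (x + t • u) - gradient f x, u⟫ t := by
    intro t
    have hline : HasDerivAt (fun t : ℝ => x + t • u) u t := by
      simpa using ((hasDerivAt_id t).smul_const u).const_add x
    have := ((hf _).hasFDerivAt.comp_hasDerivAt t hline).fun_sub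
      ((hasDerivAt_id t).mul_const ⟪gradient f x, u⟫)
    simpa [inner_sub_left, ← inner_gradient_left] using this
  let B : ℝ → ℝ := fun t => f x + L / 2 * t ^ 2 * ‖u‖ ^ 2
  have hB : ∀ t, HasDerivAt B (L * t * ‖u‖ ^ 2) t := by
    intro t
    refine ((((hasDerivAt_pow 2 t).const_mul (L / 2)).mul_const (‖u‖ ^ 2)).const_add
      (f x)).congr_deriv ?_
    push_cast
    ring
  have hbound : ∀ t ∈ Ico (0 : ℝ) 1,
      ⟪gradient f (x + t • u) - gradient f x, u⟫ ≤ L * t * ‖u‖ ^ 2 := by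
    intro t ht
    calc ⟪gradient f (x + t • u) - gradient f x, u⟫
        ≤ ‖gradient f (x + t • u) - gradient f x‖ * ‖u‖ := real_inner_le_norm _ _
      _ ≤ L * ‖(x + t • u) - x‖ * ‖u‖ := by gcongr; exact hlip _ _
      _ = L * t * ‖u‖ ^ 2 := by
        rw [add_sub_cancel_left, norm_smul, Real.norm_of_nonneg ht.1]; ring
  have := image_le_of_deriv_right_le_deriv_boundary (f := φ) (B := B)
    (fun t _ => (hφ t).continuousAt.continuousWithinAt) (fun t _ => (hφ t).hasDerivWithinAt)
    (by simp [φ, B]) (fun t _ => (hB t).continuousAt.continuousWithinAt)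
    (fun t _ => (hB t).hasDerivWithinAt) hbound (right_mem_Icc.2 zero_le_one)
  simp only [φ, B, one_smul, one_mul, one_pow, u, add_sub_cancel] at this
  linarith

end InnerProduct

section ProxStep

variable {E : Type*} [NormedAddCommGroup E] [InnerProductSpace ℝ E] [CompleteSpace E]

theorem prox_step_sufficient_decrease {S : Set E} {h : E → ℝ} {D : E → E → ℝ} {g x₀ x₁ : E}
    {α β : ℝ}
    (hS : Convex ℝ S) (hx₀ : x₀ ∈ S) (hx₁ : x₁ ∈ S) (hβ : 0 < β)
    (hmin : IsMinOn (fun y => ⟪y, g⟫ + h y + (1 / β) * D y x₀) S x₁)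
    (hconv : ConvexOn ℝ S h) (hh : DifferentiableAt ℝ h x₁)
    (hD : DifferentiableAt ℝ (fun y => D y x₀) x₁)
    (hstrong : α * ‖x₁ - x₀‖ ^ 2 ≤ ⟪x₁ - x₀, gradient (fun y => D y x₀) x₁⟫) :
    h x₁ + ⟪g, x₁ - x₀⟫ + α / β * ‖x₁ - x₀‖ ^ 2 ≤ h x₀ := by
  have hφ : HasFDerivAt (fun y => ⟪y, g⟫ + h y + (1 / β) * D y x₀)
      (innerSL ℝ g + fderiv ℝ h x₁ + (1 / β) • fderiv ℝ (fun y => D y x₀) x₁) x₁ := by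
    have hinner : HasFDerivAt (fun y => ⟪y, g⟫) (innerSL ℝ g) x₁ := by
      rw [show (fun y => ⟪y, g⟫) = innerSL ℝ g from funext fun y => real_inner_comm g y]
      exact (innerSL ℝ g).hasFDerivAt
    exact (hinner.add hh.hasFDerivAt).add (hD.hasFDerivAt.const_mul (1 / β))
  have hfirst := hmin.localize.hasFDerivWithinAt_nonneg hφ.hasFDerivWithinAt
    (sub_mem_posTangentConeAt_of_segment_subset (hS.segment_subset hx₁ hx₀))
  have hh_le := hconv.apply_sub_le_sub_of_hasFDerivAt hx₁ hx₀ hh.hasFDerivAt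
  have hD_le : fderiv ℝ (fun y => D y x₀) x₁ (x₀ - x₁) ≤ -(α * ‖x₁ - x₀‖ ^ 2) := by
    rw [← inner_gradient_left, ← neg_sub, inner_neg_right, real_inner_comm]
    linarith
  simp only [add_apply, smul_apply, innerSL_apply_apply, smul_eq_mul] at hfirst
  have hg : ⟪g, x₀ - x₁⟫ = -⟪g, x₁ - x₀⟫ := by rw [← inner_neg_right, neg_sub]
  have := mul_le_mul_of_nonneg_left hD_le (one_div_pos.2 hβ).le
  rw [div_eq_mul_one_div α β]
  linarith

end ProxStep

theorem stmt_4_general {E : Type*} [NormedAddCommGroup E] [InnerProductSpace ℝ E] [CompleteSpace E]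
    (S : Set E) (hS : Convex ℝ S)
    (h : E → ℝ) (D : E → E → ℝ)
    (f : E → ℝ) (L : ℝ)
    (hf : Differentiable ℝ f)
    (hlip : ∀ x y : E, ‖gradient f x - gradient f y‖ ≤ L * ‖x - y‖)
    (lamk : E) (hlamkS : lamk ∈ S) (g : E) (β : ℝ) (hβ : 0 < β) (c : ℝ) (hc : 0 < c)
    (lamp : E) (hlampS : lamp ∈ S)
    (hmin : ∀ y ∈ S,
      ⟪lamp, g⟫ + h lamp + (1 / β) * D lamp lamk ≤
        ⟪y, g⟫ + h y + (1 / β) * D y lamk)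
    (hconv : ConvexOn ℝ S h) (hdiff : DifferentiableAt ℝ h lamp)
    (hDdiff : DifferentiableAt ℝ (fun x => D x lamk) lamp)
    (α : ℝ)
    (hA6 : ⟪lamp - lamk, gradient (fun x => D x lamk) lamp⟫ ≥ α * ‖lamp - lamk‖ ^ 2) :
    f lamp + h lamp ≤ f lamk + h lamk -
        ((α - 1 / (2 * c)) * β - (L / 2) * β ^ 2) * ‖(1 / β) • (lamk - lamp)‖ ^ 2 +
        (c * β / 2) * ‖g - gradient f lamk‖ ^ 2 := by
  set u := lamp - lamk
  set δ := g - gradient f lamk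
  have hstep := prox_step_sufficient_decrease hS hlamkS hlampS hβ (isMinOn_iff.2 hmin) hconv
    hdiff hDdiff hA6
  have hdescent := apply_le_add_inner_gradient_add_sq_of_lipschitz hf hlip lamk lamp
  have hyoung := real_inner_le_mul_norm_sq_add_inv_mul_norm_sq (-δ) u (mul_pos hc hβ)
  have hsplit : ⟪gradient f lamk, u⟫ = ⟪g, u⟫ + ⟪-δ, u⟫ := by
    rw [← inner_add_left]; congr 1; simp [δ]
  have hG : ‖(1 / β) • (lamk - lamp)‖ ^ 2 = ‖u‖ ^ 2 / β ^ 2 := by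
    rw [norm_smul, norm_sub_rev, Real.norm_of_nonneg (by positivity)]; ring
  have hcoef : ((α - 1 / (2 * c)) * β - L / 2 * β ^ 2) * (‖u‖ ^ 2 / β ^ 2)
      = α / β * ‖u‖ ^ 2 - 1 / (2 * (c * β)) * ‖u‖ ^ 2 - L / 2 * ‖u‖ ^ 2 := by
    field_simp
  rw [norm_neg] at hyoung
  rw [hG, hcoef]
  linarith

/-- One-step inequality for a stochastic (inexact) gradient `g`: with
`G := (λ_k − λ₊)/β` and gradient error `δ := g − ∇f(λ_k)`,
`f(λ₊) + h(λ₊) ≤ f(λ_k) + h(λ_k) − ((α − 1/(2c))β − (L/2)β²)·‖G‖² + (cβ/2)·‖δ‖²`. -/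
theorem stmt_4 {E : Type*} [NormedAddCommGroup E] [InnerProductSpace ℝ E] [CompleteSpace E]
    (S : Set E) (hS : Convex ℝ S)
    (h : E → ℝ) (D : E → E → ℝ)
    (f : E → ℝ) (L : ℝ) (hL : 0 < L)
    (hf : Differentiable ℝ f)
    (hlip : ∀ x y : E, ‖gradient f x - gradient f y‖ ≤ L * ‖x - y‖)
    (lamk : E) (hlamkS : lamk ∈ S) (g : E) (β : ℝ) (hβ : 0 < β) (c : ℝ) (hc : 0 < c)
    (lamp : E) (hlampS : lamp ∈ S)
    (hmin : ∀ y ∈ S,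
      ⟪lamp, g⟫ + h lamp + (1 / β) * D lamp lamk ≤
        ⟪y, g⟫ + h y + (1 / β) * D y lamk)
    (hconv : ConvexOn ℝ S h) (hdiff : DifferentiableAt ℝ h lamp)
    (hDdiff : DifferentiableAt ℝ (fun x => D x lamk) lamp)
    (α : ℝ) (hα : 0 < α)
    (hA6 : ⟪lamp - lamk, gradient (fun x => D x lamk) lamp⟫ ≥ α * ‖lamp - lamk‖ ^ 2) :
    f lamp + h lamp ≤ f lamk + h lamk -
        ((α - 1 / (2 * c)) * β - (L / 2) * β ^ 2) * ‖(1 / β) • (lamk - lamp)‖ ^ 2 +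
        (c * β / 2) * ‖g - gradient f lamk‖ ^ 2 :=
  stmt_4_general S hS h D f L hf hlip lamk hlamkS g β hβ c hc lamp hlampS hmin hconv hdiff hDdiff α
    hA6
end
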